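/- arXiv:2502.07197 — 3 statements merged into one kernel-verified Lean document; each statement's English description precedes it below -/
import Mathlib

section
/- Let d = 2n and H = Σ_{i=1}^{2ℓ−2} P_i + 2E ∈ 𝔡_{n−ℓ+1}, with E = n_1 z_1 + ... + n_r z_r, the P_i and z_j distinct. Given a partition Σ of {P_1,...,P_{2ℓ−2}} into sets {p_1,...,p_ℓ} and {q_1,...,q_{ℓ−2}}, set x_i^Σ := p_i + Σ_j q_j + E. Then x_i^Σ ≤ H and, whenever ξ_𝔡 is defined at x_i^Σ, one has ξ_𝔡(x_i^Σ) = H. -/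
open Finsupp

/-- An effective divisor (ℕ-valued) viewed as an ordinary (ℤ-valued) divisor. -/
noncomputable def effToZ {C : Type*} (F : C →₀ ℕ) : C →₀ ℤ :=
  F.mapRange (Nat.cast : ℕ → ℤ) Nat.cast_zero

/-- The stratum `𝔡_t` of a degree-`d` linear system `𝔡`. -/
def stratum {C : Type*} (𝔡 : Set (C →₀ ℕ)) (d t : ℕ) : Set (C →₀ ℕ) :=
  {F | F ∈ 𝔡 ∧ ∃ (P : Fin (d - 2 * t) → C) (Q : Fin t → C),
    F = (∑ i, single (P i) 1) + 2 • ∑ j, single (Q j) 1}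

theorem Equiv.apply_inl_add_sum_inr_add_le_sum_add_two_smul {ι κ α M : Type*}
    [Fintype ι] [Fintype κ] [Fintype α] [AddCommMonoid M] [PartialOrder M]
    [CanonicallyOrderedAdd M] [IsOrderedAddMonoid M]
    (σ : ι ⊕ κ ≃ α) (f : α → M) (e : M) (i : ι) :
    f (σ (.inl i)) + ∑ j, f (σ (.inr j)) + e ≤ ∑ a, f a + 2 • e := by
  rw [← σ.sum_comp, Fintype.sum_sum_type, two_smul]
  have hi : f (σ (.inl i)) ≤ ∑ i', f (σ (.inl i')) :=
    Finset.single_le_sum (f := fun i' => f (σ (.inl i'))) (fun _ _ => zero_le)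
      (Finset.mem_univ i)
  gcongr
  exact le_add_self

theorem partition_points_map_to_H_general
    {C : Type*}
    (ℓ : ℕ)
    (𝔡 : Set (C →₀ ℕ))
    (P : Fin (2 * ℓ - 2) → C)
    (E : C →₀ ℕ)
    (H : C →₀ ℕ) (hH : H = (∑ i, single (P i) 1) + 2 • E)
    (hH𝔡 : H ∈ 𝔡)                                 -- hence H ∈ 𝔡_{n-ℓ+1}
    -- the partition Σ of {P 1, …, P (2ℓ-2)} into ℓ and ℓ-2 points:
    (σ : Fin ℓ ⊕ Fin (ℓ - 2) ≃ Fin (2 * ℓ - 2))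
    (x : Fin ℓ → (C →₀ ℕ))
    (hx : ∀ i, x i = single (P (σ (Sum.inl i))) 1 +
      (∑ j, single (P (σ (Sum.inr j))) 1) + E) :
    ∀ i, x i ≤ H ∧
      ((∃! G, G ∈ 𝔡 ∧ x i ≤ G) →                  -- if ξ_𝔡 is defined at x i …
        ∀ G ∈ 𝔡, x i ≤ G → G = H) := by           -- … then ξ_𝔡 (x i) = H
  intro i
  have hxH : x i ≤ H := by
    rw [hx, hH]
    exact σ.apply_inl_add_sum_inr_add_le_sum_add_two_smul (fun k => single (P k) 1) E i
  exact ⟨hxH, fun hξ G hG hxG => hξ.unique ⟨hG, hxG⟩ ⟨hH𝔡, hxH⟩⟩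

/-- let `d = 2n` and `H = Σ_{i=1}^{2ℓ-2} P i + 2E ∈ 𝔡_{n-ℓ+1}` with
`E = Σ_j nn j • z j`, the `P i` and `z j` distinct.  A partition `σ` of
`{P 1, …, P (2ℓ-2)}` into `{p 1, …, p ℓ}` and `{q 1, …, q (ℓ-2)}` yields points
`x i ^ σ := p i + Σ_j q j + E ∈ C^(n)` with `x i ^ σ ≤ H`, and whenever `ξ_𝔡` is
defined at `x i ^ σ` its value there is `H`. -/
theorem partition_points_map_to_H
    {C : Type*} (Pic : Type*) [AddCommGroup Pic]
    (OC : (C →₀ ℤ) →+ Pic)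
    (n ℓ : ℕ) (hℓ : 3 ≤ ℓ) (hn : ℓ - 1 ≤ n)
    (η : Pic)
    (𝔡 : Set (C →₀ ℕ))
    (h𝔡 : ∀ G ∈ 𝔡, OC (effToZ G) = 2 • η)        -- 𝔡 ⊆ |η^⊗2|, of degree d = 2n
    (hdeg𝔡 : ∀ G ∈ 𝔡, (G.sum fun _ m => m) = 2 * n)
    (r : ℕ) (nn : Fin r → ℕ) (hnn : ∀ j, 0 < nn j)
    (z : Fin r → C) (P : Fin (2 * ℓ - 2) → C)
    (hdist : Function.Injective (Sum.elim P z))   -- the P i and z j are distinct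
    (E : C →₀ ℕ) (hE : E = ∑ j, nn j • single (z j) 1)
    (hdegE : (∑ j, nn j) = n + 1 - ℓ)             -- deg E = n - ℓ + 1
    (H : C →₀ ℕ) (hH : H = (∑ i, single (P i) 1) + 2 • E)
    (hH𝔡 : H ∈ 𝔡)                                 -- hence H ∈ 𝔡_{n-ℓ+1}
    -- the partition Σ of {P 1, …, P (2ℓ-2)} into ℓ and ℓ-2 points:
    (σ : Fin ℓ ⊕ Fin (ℓ - 2) ≃ Fin (2 * ℓ - 2))
    (x : Fin ℓ → (C →₀ ℕ))
    (hx : ∀ i, x i = single (P (σ (Sum.inl i))) 1 +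
      (∑ j, single (P (σ (Sum.inr j))) 1) + E) :
    ∀ i, x i ≤ H ∧
      ((∃! G, G ∈ 𝔡 ∧ x i ≤ G) →                  -- if ξ_𝔡 is defined at x i …
        ∀ G ∈ 𝔡, x i ≤ G → G = H) :=
  partition_points_map_to_H_general ℓ 𝔡 P E H hH hH𝔡 σ x hx
end

section
/- In the setting of the previous statement, for each partition Σ and each i with ξ_𝔡 defined at x_i^Σ, the local multiplicity of ξ_𝔡 at x_i^Σ equals ∏_{j=1}^r C(2n_j, n_j). Conversely, any F ∈ ξ_𝔡^{−1}(H) with mult_F ξ_𝔡 = ∏_{j=1}^r C(2n_j, n_j) equals x_j^Σ for some partition Σ and index j. -/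
/-!
Write `H = Σ P_a + Σ 2 n_j z_j`. For `F ≤ H` of degree `n` the factors of `∏ C(H c, F c)` at the
reduced points `P_a` are `1`, so `mult F = ∏_j C(2 n_j, F z_j)`. Each factor is at most the
central binomial coefficient `C(2 n_j, n_j)`, with equality only at `F z_j = n_j`; hence the
multiplicity `∏_j C(2 n_j, n_j)` is attained exactly at the divisors `F = Σ_{a ∈ T} P_a + E`, and then the
degree forces `#T = ℓ - 1`. Finally every `(ℓ - 1)`-subset `T` of the `P_a` is `{p_i, q_1, …, q_{ℓ-2}}`
for some partition `σ` and index `i`: pick `p_i ∈ T` and let the complement of `T \ {p_i}` be the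
`p`'s.
-/

open Finsupp Finset

namespace Nat

theorem choose_lt_choose_succ {n r : ℕ} (h : 2 * r + 1 < n) :
    n.choose r < n.choose (r + 1) := by
  refine Nat.lt_of_mul_lt_mul_right (a := r + 1) ?_
  rw [choose_succ_right_eq]
  exact Nat.mul_lt_mul_of_pos_left (by omega) (choose_pos (by omega))

theorem choose_lt_centralBinom {m k : ℕ} (hk : k < m) : (2 * m).choose k < centralBinom m :=
  strictMonoOn_Iic_of_lt_succ (ψ := (2 * m).choose) (n := m)
    (fun r hr => choose_lt_choose_succ (by omega)) (Set.mem_Iic.2 hk.le) (Set.mem_Iic.2 le_rfl) hk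

theorem choose_eq_centralBinom_iff {m k : ℕ} (hk : k ≤ 2 * m) :
    (2 * m).choose k = centralBinom m ↔ k = m := by
  refine ⟨fun h => ?_, fun h => h ▸ rfl⟩
  by_contra hne
  rcases Nat.lt_or_gt_of_ne hne with hlt | hgt
  · exact (choose_lt_centralBinom hlt).ne h
  · rw [← choose_symm hk] at h
    exact (choose_lt_centralBinom (by omega : 2 * m - k < m)).ne h

theorem eq_of_prod_choose_eq_prod_centralBinom {ι : Type*} {s : Finset ι} {m k : ι → ℕ}
    (hk : ∀ i ∈ s, k i ≤ 2 * m i)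
    (h : ∏ i ∈ s, (2 * m i).choose (k i) = ∏ i ∈ s, (m i).centralBinom) :
    ∀ i ∈ s, k i = m i := by
  by_contra! ⟨i, hi, hne⟩
  refine h.not_lt (prod_lt_prod (fun j hj => choose_pos (hk j hj))
    (fun j _ => choose_le_centralBinom _ _) ⟨i, hi, ?_⟩)
  exact (choose_le_centralBinom _ _).lt_of_ne
    (mt (choose_eq_centralBinom_iff (hk i hi)).1 hne)

end Nat

section divisor

variable {ι C : Type*} [Fintype ι]

noncomputable def divisor (Q : ι → C) (w : ι → ℕ) : C →₀ ℕ := ∑ b, single (Q b) (w b)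

variable {Q : ι → C}

theorem divisor_apply_self (hQ : Function.Injective Q) (w : ι → ℕ) (a : ι) :
    divisor Q w (Q a) = w a := by
  classical
  simp [divisor, finsetSum_apply, single_apply, hQ.eq_iff]

theorem divisor_apply_of_notMem_range (w : ι → ℕ) {c : C} (hc : c ∉ Set.range Q) :
    divisor Q w c = 0 := by
  classical
  simp only [divisor, finsetSum_apply, single_apply]
  exact sum_eq_zero fun b _ => if_neg fun h => hc ⟨b, h⟩

theorem divisor_mono {w w' : ι → ℕ} (h : w ≤ w') : divisor Q w ≤ divisor Q w' :=
  sum_le_sum fun b _ => single_mono (h b)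

theorem divisor_degree (w : ι → ℕ) : (divisor Q w).sum (fun _ m => m) = ∑ b, w b := by
  rw [divisor, ← sum_finsetSum_index (fun _ => rfl) (fun _ _ _ => rfl)]
  exact sum_congr rfl fun b _ => sum_single_index rfl

theorem eq_divisor_of_le (hQ : Function.Injective Q) {F : C →₀ ℕ} {w : ι → ℕ}
    (hF : F ≤ divisor Q w) : F = divisor Q (F ∘ Q) := by
  ext c
  by_cases hc : c ∈ Set.range Q
  · obtain ⟨a, rfl⟩ := hc
    rw [divisor_apply_self hQ, Function.comp_apply]
  · rw [divisor_apply_of_notMem_range _ hc]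
    simpa [divisor_apply_of_notMem_range _ hc] using hF c

theorem prod_choose_divisor (hQ : Function.Injective Q) {F : C →₀ ℕ} {w : ι → ℕ}
    (hF : F ≤ divisor Q w) :
    ∏ c ∈ (divisor Q w).support, (divisor Q w c).choose (F c) = ∏ b, (w b).choose (F (Q b)) := by
  classical
  have hsupp : (divisor Q w).support ⊆ univ.image Q := fun c hc => by
    by_contra h
    exact mem_support_iff.1 hc (divisor_apply_of_notMem_range w (by simpa using h))
  rw [prod_subset hsupp, prod_image fun a _ b _ h => hQ h]
  · exact prod_congr rfl fun b _ => by rw [divisor_apply_self hQ]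
  · intro c _ hc
    have hc0 : divisor Q w c = 0 := notMem_support_iff.1 hc
    have hF0 : F c = 0 := Nat.le_zero.1 (hc0 ▸ hF c)
    rw [hc0, hF0, Nat.choose_zero_right]

end divisor

section partition

variable {α : Type*} {p q : ℕ}

/-- The indices of `p_i, q_1, …, q_{ℓ-2}` for the partition `σ`, whose `p`'s are the `σ (.inl _)`. -/
def partitionPoints (σ : Fin p ⊕ Fin q ≃ α) (i : Fin p) : Finset α :=
  (insert (Sum.inl i) (univ.map Function.Embedding.inr)).map σ.toEmbedding

theorem sum_partitionPoints {M : Type*} [AddCommMonoid M] (σ : Fin p ⊕ Fin q ≃ α) (i : Fin p)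
    (f : α → M) : ∑ a ∈ partitionPoints σ i, f a = f (σ (.inl i)) + ∑ j, f (σ (.inr j)) := by
  classical
  rw [partitionPoints, sum_map, sum_insert (by simp), sum_map]
  rfl

theorem card_partitionPoints (σ : Fin p ⊕ Fin q ≃ α) (i : Fin p) :
    #(partitionPoints σ i) = q + 1 := by
  classical
  rw [partitionPoints, card_map, card_insert_of_notMem (by simp), card_map, card_univ,
    Fintype.card_fin]

theorem exists_partitionPoints_eq [Fintype α] [DecidableEq α] {T : Finset α}
    (hT : #T = q + 1) (hα : Fintype.card α = p + q) :
    ∃ (σ : Fin p ⊕ Fin q ≃ α) (i : Fin p), partitionPoints σ i = T := by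
  obtain ⟨s, hs⟩ : T.Nonempty := card_pos.1 (by omega)
  set S := T.erase s
  have hS : #S = q := by rw [card_erase_of_mem hs, hT]; rfl
  have hSc : Fintype.card {a // a ∉ S} = p := by
    rw [Fintype.card_subtype_compl, Fintype.card_coe, hS, hα]; omega
  let eS : Fin q ≃ {a // a ∈ S} := (S.equivFinOfCardEq hS).symm
  let eU : Fin p ≃ {a // a ∉ S} := (Fintype.equivFinOfCardEq hSc).symm
  refine ⟨((eU.sumCongr eS).trans (Equiv.sumComm _ _)).trans (Equiv.sumCompl (· ∈ S)),
    eU.symm ⟨s, notMem_erase s T⟩, ?_⟩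
  have hrange (a : α) : (∃ j, (eS j : α) = a) ↔ a ∈ S :=
    ⟨fun ⟨j, hj⟩ => hj ▸ (eS j).2, fun h => ⟨eS.symm ⟨a, h⟩, by simp⟩⟩
  ext a
  have hT' : a ∈ T ↔ a = s ∨ a ∈ S := by rw [← mem_insert, insert_erase hs]
  simp [partitionPoints, hT', hrange]

end partition

section subsetDivisor

variable {C : Type*} {m r : ℕ} (P : Fin m → C) (z : Fin r → C)

noncomputable def subsetDivisor (T : Finset (Fin m)) (v : Fin r → ℕ) : C →₀ ℕ :=
  ∑ a ∈ T, single (P a) 1 + ∑ j, single (z j) (v j)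

variable {P z}

theorem subsetDivisor_eq_divisor (T : Finset (Fin m)) (v : Fin r → ℕ) :
    subsetDivisor P z T v =
      divisor (Sum.elim P z) (Sum.elim (fun a => if a ∈ T then 1 else 0) v) := by
  simp [subsetDivisor, divisor, Fintype.sum_sum_type, apply_ite, sum_ite_mem]

theorem subsetDivisor_degree (T : Finset (Fin m)) (v : Fin r → ℕ) :
    (subsetDivisor P z T v).sum (fun _ k => k) = #T + ∑ j, v j := by
  simp [subsetDivisor_eq_divisor, divisor_degree, Fintype.sum_sum_type]

theorem subsetDivisor_apply_right (hPz : Function.Injective (Sum.elim P z))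
    (T : Finset (Fin m)) (v : Fin r → ℕ) (j : Fin r) : subsetDivisor P z T v (z j) = v j := by
  rw [subsetDivisor_eq_divisor]
  exact divisor_apply_self hPz _ (.inr j)

theorem subsetDivisor_le (T : Finset (Fin m)) {v w : Fin r → ℕ} (hvw : v ≤ w) :
    subsetDivisor P z T v ≤ divisor (Sum.elim P z) (Sum.elim 1 w) := by
  rw [subsetDivisor_eq_divisor]
  refine divisor_mono fun b => ?_
  rcases b with a | j
  · by_cases a ∈ T <;> simp [*]
  · exact hvw j

theorem eq_subsetDivisor_of_le (hPz : Function.Injective (Sum.elim P z)) {F : C →₀ ℕ}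
    {w : Fin r → ℕ} (hF : F ≤ divisor (Sum.elim P z) (Sum.elim 1 w)) :
    F = subsetDivisor P z {a | F (P a) = 1} (F ∘ z) := by
  rw [subsetDivisor_eq_divisor]
  refine (eq_divisor_of_le hPz hF).trans (congrArg _ (funext fun b => ?_))
  rcases b with a | j
  · have := (hF (P a)).trans_eq (divisor_apply_self hPz _ (.inl a))
    simp only [Function.comp_apply, Sum.elim_inl, Pi.one_apply, mem_filter, mem_univ,
      true_and] at this ⊢
    split_ifs <;> omega
  · rfl

theorem prod_choose_divisor_sumElim_one (hPz : Function.Injective (Sum.elim P z))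
    {F : C →₀ ℕ} {w : Fin r → ℕ} (hF : F ≤ divisor (Sum.elim P z) (Sum.elim 1 w)) :
    ∏ c ∈ (divisor (Sum.elim P z) (Sum.elim 1 w)).support,
        (divisor (Sum.elim P z) (Sum.elim 1 w) c).choose (F c) =
      ∏ j, (w j).choose (F (z j)) := by
  have hFP (a : Fin m) : F (P a) ≤ 1 := (hF _).trans_eq (divisor_apply_self hPz _ (.inl a))
  rw [prod_choose_divisor hPz hF, Fintype.prod_sum_type, prod_eq_one, one_mul]
  · rfl
  · intro a _
    rcases Nat.le_one_iff_eq_zero_or_eq_one.1 (hFP a) with h | h <;> simp [h]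

end subsetDivisor

theorem partition_points_multiplicity_general
    {C : Type*}
    (n ℓ : ℕ) (hℓ : 3 ≤ ℓ) (hn : ℓ - 1 ≤ n)
    (𝔡 : Set (C →₀ ℕ))                            -- 𝔡 ⊆ |η^⊗2| of degree 2n
    (r : ℕ) (nn : Fin r → ℕ)
    (z : Fin r → C) (P : Fin (2 * ℓ - 2) → C)
    (hdist : Function.Injective (Sum.elim P z))   -- the P i and z j are distinct
    (E : C →₀ ℕ) (hE : E = ∑ j, nn j • single (z j) 1)
    (hdegE : (∑ j, nn j) = n + 1 - ℓ)             -- deg E = n - ℓ + 1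
    (H : C →₀ ℕ) (hH : H = (∑ i, single (P i) 1) + 2 • E)
    (mult : (C →₀ ℕ) → ℕ)                          -- local multiplicity of ξ_𝔡
    -- the multiplicity of ξ_𝔡 at F ≤ H in the fiber over H is ∏ C(H c, F c):
    (hmult : ∀ F : C →₀ ℕ, F ≤ H → (F.sum fun _ m => m) = n →
      mult F = ∏ c ∈ H.support, Nat.choose (H c) (F c))
    -- the points x i ^ σ attached to a partition σ:
    (x : (Fin ℓ ⊕ Fin (ℓ - 2) ≃ Fin (2 * ℓ - 2)) → Fin ℓ → (C →₀ ℕ))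
    (hx : ∀ σ i, x σ i = single (P (σ (Sum.inl i))) 1 +
      (∑ j, single (P (σ (Sum.inr j))) 1) + E) :
    -- (2): the multiplicity of ξ_𝔡 at x i ^ σ, where defined, is ∏ C(2 nn j, nn j)
    (∀ σ i, (∃! G, G ∈ 𝔡 ∧ x σ i ≤ G) →
      mult (x σ i) = ∏ j, Nat.choose (2 * nn j) (nn j)) ∧
    -- converse: any F in the fiber over H of that multiplicity is some x i ^ σ
    (∀ F : C →₀ ℕ, (F.sum fun _ m => m) = n → F ≤ H →
      (∀ G ∈ 𝔡, F ≤ G → G = H) →                  -- F ∈ ξ_𝔡⁻¹(H)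
      mult F = ∏ j, Nat.choose (2 * nn j) (nn j) →
      ∃ σ i, F = x σ i) := by
  classical
  have hE' : E = ∑ j, single (z j) (nn j) := by simp [hE, smul_single]
  have hHD : H = divisor (Sum.elim P z) (Sum.elim 1 fun j => 2 * nn j) := by
    simp [hH, hE', divisor, Fintype.sum_sum_type, Finset.smul_sum, smul_single]
  have hxD (σ i) : x σ i = subsetDivisor P z (partitionPoints σ i) nn := by
    rw [hx, ← sum_partitionPoints σ i (fun a => single (P a) 1), hE']
    rfl
  have hmultH {F} (hF : F ≤ H) (hFdeg : (F.sum fun _ m => m) = n) :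
      mult F = ∏ j, (2 * nn j).choose (F (z j)) := by
    rw [hmult F hF hFdeg]
    subst hHD
    exact prod_choose_divisor_sumElim_one hdist hF
  refine ⟨fun σ i _ => ?_, fun F hFdeg hFH _ hFmult => ?_⟩
  · have hdeg : (x σ i).sum (fun _ m => m) = n := by
      rw [hxD, subsetDivisor_degree, card_partitionPoints, hdegE]; omega
    have hle : x σ i ≤ H := by
      rw [hxD, hHD]
      exact subsetDivisor_le _ fun j => Nat.le_mul_of_pos_left _ two_pos
    rw [hmultH hle hdeg, hxD]
    simp only [subsetDivisor_apply_right hdist]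
  · rw [hHD] at hFH
    have hFz : F ∘ z = nn := funext fun j =>
      Nat.eq_of_prod_choose_eq_prod_centralBinom (s := univ)
        (fun j _ => (hFH (z j)).trans_eq (divisor_apply_self hdist _ (.inr j)))
        (by rw [← hmultH (hHD ▸ hFH) hFdeg, hFmult]; rfl) j (mem_univ j)
    have hFT := eq_subsetDivisor_of_le hdist hFH
    rw [hFz] at hFT
    have hT := subsetDivisor_degree (P := P) (z := z) {a | F (P a) = 1} nn
    rw [← hFT, hFdeg, hdegE] at hT
    obtain ⟨σ, i, hσ⟩ := exists_partitionPoints_eq (p := ℓ) (q := ℓ - 2) (T := {a | F (P a) = 1})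
      (by omega) (by simp only [Fintype.card_fin]; omega)
    exact ⟨σ, i, by rw [hFT, hxD, hσ]⟩

/-- with `H = Σ_{i=1}^{2ℓ-2} P i + 2E ∈ 𝔡_{n-ℓ+1}`,
`E = Σ_j nn j • z j`, all `P i`, `z j` distinct, and `x i ^ σ := p i + Σ q j + E`
for a partition `σ` of `{P 1, …, P (2ℓ-2)}`: whenever `ξ_𝔡` is defined at
`x i ^ σ`, its local multiplicity there is `∏_j C(2 nn j, nn j)`; conversely any
`F ∈ ξ_𝔡⁻¹(H)` with `mult_F ξ_𝔡 = ∏_j C(2 nn j, nn j)` equals some `x i ^ σ`.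
(The local multiplicity of `ξ_𝔡` at `F = Σ m_i p_i` over `H = Σ n_i p_i` is
`∏ C(n_i, m_i)`.) -/
theorem partition_points_multiplicity
    {C : Type*}
    (n ℓ : ℕ) (hℓ : 3 ≤ ℓ) (hn : ℓ - 1 ≤ n)
    (𝔡 : Set (C →₀ ℕ))                            -- 𝔡 ⊆ |η^⊗2| of degree 2n
    (hdeg𝔡 : ∀ G ∈ 𝔡, (G.sum fun _ m => m) = 2 * n)
    (r : ℕ) (nn : Fin r → ℕ) (hnn : ∀ j, 0 < nn j)
    (z : Fin r → C) (P : Fin (2 * ℓ - 2) → C)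
    (hdist : Function.Injective (Sum.elim P z))   -- the P i and z j are distinct
    (E : C →₀ ℕ) (hE : E = ∑ j, nn j • single (z j) 1)
    (hdegE : (∑ j, nn j) = n + 1 - ℓ)             -- deg E = n - ℓ + 1
    (H : C →₀ ℕ) (hH : H = (∑ i, single (P i) 1) + 2 • E)
    (hH𝔡 : H ∈ 𝔡)                                 -- H ∈ 𝔡_{n-ℓ+1}
    (mult : (C →₀ ℕ) → ℕ)                          -- local multiplicity of ξ_𝔡
    -- the multiplicity of ξ_𝔡 at F ≤ H in the fiber over H is ∏ C(H c, F c):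
    (hmult : ∀ F : C →₀ ℕ, F ≤ H → (F.sum fun _ m => m) = n →
      mult F = ∏ c ∈ H.support, Nat.choose (H c) (F c))
    -- the points x i ^ σ attached to a partition σ:
    (x : (Fin ℓ ⊕ Fin (ℓ - 2) ≃ Fin (2 * ℓ - 2)) → Fin ℓ → (C →₀ ℕ))
    (hx : ∀ σ i, x σ i = single (P (σ (Sum.inl i))) 1 +
      (∑ j, single (P (σ (Sum.inr j))) 1) + E) :
    -- (2): the multiplicity of ξ_𝔡 at x i ^ σ, where defined, is ∏ C(2 nn j, nn j)
    (∀ σ i, (∃! G, G ∈ 𝔡 ∧ x σ i ≤ G) →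
      mult (x σ i) = ∏ j, Nat.choose (2 * nn j) (nn j)) ∧
    -- converse: any F in the fiber over H of that multiplicity is some x i ^ σ
    (∀ F : C →₀ ℕ, (F.sum fun _ m => m) = n → F ≤ H →
      (∀ G ∈ 𝔡, F ≤ G → G = H) →                  -- F ∈ ξ_𝔡⁻¹(H)
      mult F = ∏ j, Nat.choose (2 * nn j) (nn j) →
      ∃ σ i, F = x σ i) :=
  partition_points_multiplicity_general n ℓ hℓ hn 𝔡 r nn z P hdist E hE hdegE H hH mult hmult x hx
end

section
/- In the setting of Theorem on fibers over 𝔡_{n−ℓ+1}: define a_i := O_C(x_i^Σ) ⊗ η^{−1} ∈ Pic^0(C). Then the a_i satisfy the Gunning relations: a_i^{⊗2} ≅ O_C(2p_i + Σ_j q_j − Σ_k p_k) and a_i ⊗ a_j ≅ O_C(p_i + p_j + Σ_j q_j − Σ_k p_k); hence a_1,...,a_ℓ are Gunning multisecant points. -/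
open Finsupp

theorem effToZ_add {C : Type*} (A B : C →₀ ℕ) : effToZ (A + B) = effToZ A + effToZ B := by
  ext c; simp [effToZ]

theorem effToZ_smul2 {C : Type*} (A : C →₀ ℕ) : effToZ (2 • A) = 2 • effToZ A := by
  ext c; simp [effToZ]

theorem effToZ_single {C : Type*} (c : C) : effToZ (single c 1) = single c (1 : ℤ) := by
  ext d
  simp [effToZ, Finsupp.single_apply]

theorem effToZ_sum {C : Type*} {m : ℕ} (f : Fin m → C) :
    effToZ (∑ j, single (f j) 1) = ∑ j, single (f j) (1 : ℤ) := by
  have h : effToZ (∑ j, single (f j) 1) = ∑ j, effToZ (single (f j) 1) :=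
    map_sum (mapRange.addMonoidHom (Nat.castAddMonoidHom ℤ)) _ _
  rw [h]
  simp [effToZ_single]

/-- let `η^⊗2 ≅ O_C(H)` with
`H = p 1 + ⋯ + p ℓ + q 1 + ⋯ + q (ℓ-2) + 2E` for distinct points `p i`, `q j` and
an effective divisor `E`, and set `x i := p i + Σ_j q j + E` and
`a i := O_C(x i) ⊗ η⁻¹ ∈ Pic⁰(C)`.  Then the `a i` satisfy the Gunning relations,
hence are Gunning multisecant points. -/
theorem partition_points_gunning
    {C : Type*} (Pic : Type*) [AddCommGroup Pic]
    (OC : (C →₀ ℤ) →+ Pic)                      -- divisor class map D ↦ O_C(D)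
    (degp : Pic →+ ℤ)
    (hdegOC : ∀ D : C →₀ ℤ, degp (OC D) = D.sum fun _ m => m)
    (n ℓ : ℕ) (hℓ : 3 ≤ ℓ) (hn : ℓ - 1 ≤ n)
    (p : Fin ℓ → C) (q : Fin (ℓ - 2) → C)
    (hdist : Function.Injective (Sum.elim p q))  -- the points are pairwise distinct
    (E : C →₀ ℕ)                                  -- an effective divisor
    (H : C →₀ ℕ)
    (hH : H = (∑ i, single (p i) 1) + (∑ j, single (q j) 1) + 2 • E)
    (η : Pic) (hηdeg : degp η = n)               -- η ∈ Pic^n(C)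
    (hη2 : 2 • η = OC (effToZ H))                -- η^⊗2 ≅ O_C(H)
    (x : Fin ℓ → (C →₀ ℕ))
    (hx : ∀ i, x i = single (p i) 1 + (∑ j, single (q j) 1) + E)
    (a : Fin ℓ → Pic)
    (ha : ∀ i, a i = OC (effToZ (x i)) - η) :    -- a i := O_C(x i ^ Σ) ⊗ η⁻¹
    (∀ i, degp (a i) = 0) ∧                       -- a i ∈ Pic⁰(C)
    (∀ i, 2 • a i =
      OC (2 • single (p i) 1 + (∑ j, single (q j) 1) - ∑ k, single (p k) 1)) ∧
    (∀ i j, i ≠ j → a i + a j =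
      OC (single (p i) 1 + single (p j) 1 + (∑ j, single (q j) 1)
          - ∑ k, single (p k) 1)) := by
  have hxZ : ∀ i, effToZ (x i)
      = single (p i) (1 : ℤ) + (∑ j, single (q j) (1 : ℤ)) + effToZ E := by
    intro i
    rw [hx i, effToZ_add, effToZ_add, effToZ_single, effToZ_sum]
  have hHZ : effToZ H
      = (∑ i, single (p i) (1 : ℤ)) + (∑ j, single (q j) (1 : ℤ)) + 2 • effToZ E := by
    rw [hH, effToZ_add, effToZ_add, effToZ_sum, effToZ_sum, effToZ_smul2]
  -- key divisor identities
  have hdiv2 : ∀ i, 2 • effToZ (x i) - effToZ H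
      = 2 • single (p i) (1 : ℤ) + (∑ j, single (q j) (1 : ℤ)) - ∑ k, single (p k) (1 : ℤ) := by
    intro i; rw [hxZ, hHZ]; abel
  have hdivij : ∀ i j, effToZ (x i) + effToZ (x j) - effToZ H
      = single (p i) (1 : ℤ) + single (p j) (1 : ℤ) + (∑ j, single (q j) (1 : ℤ))
          - ∑ k, single (p k) (1 : ℤ) := by
    intro i j; rw [hxZ, hxZ, hHZ]; abel
  -- degrees
  have hdeg_single : ∀ c : C, degp (OC (single c (1 : ℤ))) = 1 := by
    intro c
    rw [hdegOC, Finsupp.sum_single_index]; rfl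
  have hdeg_sum : ∀ {m : ℕ} (f : Fin m → C),
      degp (OC (∑ j, single (f j) (1 : ℤ))) = m := by
    intro m f
    rw [map_sum, map_sum]
    simp only [hdeg_single]
    simp
  have hH2 : degp (OC (effToZ H)) = 2 * (n : ℤ) := by
    rw [← hη2, map_nsmul, hηdeg, nsmul_eq_mul]
    norm_num
  refine ⟨?_, ?_, ?_⟩
  · intro i
    have h1 := congrArg (fun D => degp (OC D)) (hdiv2 i)
    simp only [map_sub, map_add, map_nsmul, nsmul_eq_mul, hH2, hdeg_single, hdeg_sum] at h1
    rw [ha i, map_sub, hηdeg]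
    omega
  · intro i
    rw [ha i, smul_sub, hη2, ← map_nsmul, ← map_sub, hdiv2 i]
  · intro i j _
    rw [ha i, ha j]
    have : OC (effToZ (x i)) - η + (OC (effToZ (x j)) - η)
        = OC (effToZ (x i)) + OC (effToZ (x j)) - 2 • η := by abel
    rw [this, hη2, ← map_add, ← map_sub, hdivij i j]
end
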